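/- Soundness of S3VML–II: for any set Γ of 3VML-formulas and any 3VML-formula A, if Γ ⊢_II A then Γ ⊨_II A. -/
import Mathlib

/-- The three truth values of three-valued logic. -/
inductive TV : Type
  | T : TV
  | U : TV
  | F : TV
deriving DecidableEq

open TV

/-- Weak Kleene negation. -/
def negTV : TV → TV
  | T => F
  | U => U
  | F => T

/-- Weak Kleene conjunction (`U` is infectious, otherwise classical). -/
def andTV : TV → TV → TV
  | U, _ => U
  | _, U => U
  | T, T => T
  | _, _ => F

/-- Weak Kleene disjunction (`U` is infectious, otherwise classical). -/
def orTV : TV → TV → TV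
  | U, _ => U
  | _, U => U
  | F, F => F
  | _, _ => T

/-- Formulas of the modal language 3VML. -/
inductive Form (P : Type) : Type
  | atom : P → Form P
  | neg : Form P → Form P
  | conj : Form P → Form P → Form P
  | disj : Form P → Form P → Form P
  | box : Form P → Form P

/-- The natural deduction proof system S3VML–II.  `DerII Γ A` means `Γ ⊢_II A`. -/
inductive DerII {P : Type} : Set (Form P) → Form P → Prop
  | mem {Γ : Set (Form P)} {A : Form P} : A ∈ Γ → DerII Γ A
  | weaken {Γ Δ : Set (Form P)} {A : Form P} : Γ ⊆ Δ → DerII Γ A → DerII Δ A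
  | efq {Γ : Set (Form P)} {A B : Form P} :
      DerII Γ A → DerII Γ (.neg A) → DerII Γ B
  | nnI {Γ : Set (Form P)} {A : Form P} : DerII Γ A → DerII Γ (.neg (.neg A))
  | nnE {Γ : Set (Form P)} {A : Form P} : DerII Γ (.neg (.neg A)) → DerII Γ A
  | orI1 {Γ : Set (Form P)} {A B : Form P} :
      DerII Γ (.conj (.neg A) B) → DerII Γ (.disj A B)
  | orI2 {Γ : Set (Form P)} {A B : Form P} :
      DerII Γ (.conj A (.neg B)) → DerII Γ (.disj A B)
  | orI3 {Γ : Set (Form P)} {A B : Form P} :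
      DerII Γ (.conj A B) → DerII Γ (.disj A B)
  | orE {Γ : Set (Form P)} {A B C : Form P} :
      DerII Γ (.disj A B) →
      DerII (insert (.conj A B) Γ) C →
      DerII (insert (.conj A (.neg B)) Γ) C →
      DerII (insert (.conj (.neg A) B) Γ) C →
      DerII Γ C
  | andI {Γ : Set (Form P)} {A B : Form P} :
      DerII Γ A → DerII Γ B → DerII Γ (.conj A B)
  | andE1 {Γ : Set (Form P)} {A B : Form P} : DerII Γ (.conj A B) → DerII Γ A
  | andE2 {Γ : Set (Form P)} {A B : Form P} : DerII Γ (.conj A B) → DerII Γ B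
  | boxI1 {Γ : Set (Form P)} {A : Form P} :
      DerII Γ A →
      DerII (insert (.disj A (.neg A)) (Form.box '' Γ)) (.box A)
  | boxI2 {Γ : Set (Form P)} {A : Form P} :
      DerII Γ (.disj A (.neg A)) → DerII Γ (.box (.disj A (.neg A)))
  | nOrI {Γ : Set (Form P)} {A B : Form P} :
      DerII Γ (.conj (.neg A) (.neg B)) → DerII Γ (.neg (.disj A B))
  | nOrE {Γ : Set (Form P)} {A B : Form P} :
      DerII Γ (.neg (.disj A B)) → DerII Γ (.conj (.neg A) (.neg B))
  | nAndI {Γ : Set (Form P)} {A B : Form P} :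
      DerII Γ (.disj (.neg A) (.neg B)) → DerII Γ (.neg (.conj A B))
  | nAndE {Γ : Set (Form P)} {A B : Form P} :
      DerII Γ (.neg (.conj A B)) → DerII Γ (.disj (.neg A) (.neg B))
  | nBoxI {Γ : Set (Form P)} {A : Form P} :
      DerII Γ (.disj A (.neg A)) →
      DerII Γ (.disj (.box A) (.neg (.box A)))
  | nBoxE {Γ : Set (Form P)} {A : Form P} :
      DerII Γ (.disj (.box A) (.neg (.box A))) →
      DerII Γ (.disj A (.neg A))

/-- A three-valued Kripke model: worlds, an accessibility relation and a
three-valued valuation.  (Pointed models always have a world, so allowing an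
empty carrier does not change the semantic consequence relation.) -/
structure KModel (P : Type) where
  S : Type
  R : S → S → Prop
  V : S → P → TV

/-- The restriction defining three-valued Kripke models–II: if a letter has
value `U` at a world, it also has value `U` at every predecessor. -/
def IsModelII {P : Type} (M : KModel P) : Prop :=
  ∀ (s : M.S) (p : P), M.V s p = TV.U → ∀ t : M.S, M.R t s → M.V t p = TV.U

open Classical in
/-- Semantics II: the three-valued valuation of a formula at a world,
with the weak Kleene clauses for the propositional connectives and the
epistemic/temporal clause for `□`. -/
noncomputable def ValII {P : Type} (M : KModel P) : Form P → M.S → TV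
  | .atom p, s => M.V s p
  | .neg A, s => negTV (ValII M A s)
  | .conj A B, s => andTV (ValII M A s) (ValII M B s)
  | .disj A B, s => orTV (ValII M A s) (ValII M B s)
  | .box A, s =>
      if ValII M A s = TV.U then TV.U
      else if ∀ t, M.R s t → ValII M A t = TV.T then TV.T
      else TV.F

/-- `M,s ⊨_II A` iff `Val^M_II(s,A) = T`. -/
def SatII {P : Type} (M : KModel P) (s : M.S) (A : Form P) : Prop :=
  ValII M A s = TV.T

/-- Semantic consequence `Γ ⊨_II A` over all pointed three-valued Kripke models–II. -/
def ConsqII {P : Type} (Γ : Set (Form P)) (A : Form P) : Prop :=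
  ∀ (M : KModel P), IsModelII M →
    ∀ s : M.S, (∀ B ∈ Γ, SatII M s B) → SatII M s A


lemma orT_cases : ∀ a b : TV, orTV a b = TV.T →
    (a = TV.T ∧ b = TV.T) ∨ (a = TV.T ∧ b = TV.F) ∨ (a = TV.F ∧ b = TV.T) := by
  intro a b h; cases a <;> cases b <;> revert h <;> decide

lemma valII_disj {P : Type} (M : KModel P) (A B : Form P) (s : M.S) :
    ValII M (.disj A B) s = orTV (ValII M A s) (ValII M B s) := by rw [ValII]

lemma valII_neg {P : Type} (M : KModel P) (A : Form P) (s : M.S) :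
    ValII M (.neg A) s = negTV (ValII M A s) := by rw [ValII]

lemma boxT_iff {P : Type} (M : KModel P) (A : Form P) (s : M.S) :
    ValII M (.box A) s = TV.T ↔
      (ValII M A s ≠ TV.U ∧ ∀ t, M.R s t → ValII M A t = TV.T) := by
  rw [ValII]
  split_ifs with h1 h2 <;> simp_all

lemma boxU_iff {P : Type} (M : KModel P) (A : Form P) (s : M.S) :
    ValII M (.box A) s = TV.U ↔ ValII M A s = TV.U := by
  rw [ValII]
  split_ifs with h1 h2 <;> simp_all

lemma persistU {P : Type} (M : KModel P) (hM : IsModelII M) (A : Form P) :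
    ∀ s t : M.S, M.R s t → ValII M A t = TV.U → ValII M A s = TV.U := by
  induction A with
  | atom p => intro s t hst h; exact hM t p h s hst
  | neg A ih =>
      intro s t hst h
      simp only [ValII] at h ⊢
      have : ValII M A t = TV.U := by
        cases hv : ValII M A t <;> rw [hv] at h <;>
          first | rfl | exact absurd h (by decide)
      rw [ih s t hst this]; rfl
  | conj A B ihA ihB =>
      intro s t hst h
      simp only [ValII] at h ⊢
      cases hA : ValII M A t <;> cases hB : ValII M B t <;> rw [hA, hB] at h <;>
        first
        | exact absurd h (by decide)
        | (rw [ihA s t hst hA]; cases ValII M B s <;> rfl)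
        | (rw [ihB s t hst hB]; cases ValII M A s <;> rfl)
  | disj A B ihA ihB =>
      intro s t hst h
      simp only [ValII] at h ⊢
      cases hA : ValII M A t <;> cases hB : ValII M B t <;> rw [hA, hB] at h <;>
        first
        | exact absurd h (by decide)
        | (rw [ihA s t hst hA]; cases ValII M B s <;> rfl)
        | (rw [ihB s t hst hB]; cases ValII M A s <;> rfl)
  | box A ih =>
      intro s t hst h
      rw [boxU_iff] at h ⊢
      exact ih s t hst h


/-- Soundness of S3VML–II: if `Γ ⊢_II A` then `Γ ⊨_II A`. -/
theorem soundness_II (P : Type) [Countable P] [Nonempty P]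
    (Γ : Set (Form P)) (A : Form P) (h : DerII Γ A) : ConsqII Γ A := by
  induction h with
  | mem hA => intro M hM s hΓ; exact hΓ _ hA
  | weaken hsub _ ih =>
      intro M hM s hΓ; exact ih M hM s (fun B hB => hΓ B (hsub hB))
  | efq _ _ ihA ihnA =>
      intro M hM s hΓ
      have h1 := ihA M hM s hΓ
      have h2 := ihnA M hM s hΓ
      simp only [SatII, ValII] at h1 h2
      rw [h1] at h2; exact absurd h2 (by decide)
  | nnI _ ih =>
      intro M hM s hΓ
      have h1 := ih M hM s hΓ
      simp only [SatII, ValII] at h1 ⊢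
      rw [h1]; rfl
  | nnE _ ih =>
      intro M hM s hΓ
      have h1 := ih M hM s hΓ
      simp only [SatII, ValII] at h1 ⊢
      cases hv : ValII M _ s <;> rw [hv] at h1 <;>
        first | rfl | exact absurd h1 (by decide)
  | orI1 _ ih =>
      intro M hM s hΓ
      have h1 := ih M hM s hΓ
      simp only [SatII, ValII] at h1 ⊢
      rename_i A B _
      cases hA : ValII M A s <;> cases hB : ValII M B s <;> rw [hA, hB] at h1 <;>
        first | rfl | exact absurd h1 (by decide)
  | orI2 _ ih =>
      intro M hM s hΓ
      have h1 := ih M hM s hΓ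
      simp only [SatII, ValII] at h1 ⊢
      rename_i A B _
      cases hA : ValII M A s <;> cases hB : ValII M B s <;> rw [hA, hB] at h1 <;>
        first | rfl | exact absurd h1 (by decide)
  | orI3 _ ih =>
      intro M hM s hΓ
      have h1 := ih M hM s hΓ
      simp only [SatII, ValII] at h1 ⊢
      rename_i A B _
      cases hA : ValII M A s <;> cases hB : ValII M B s <;> rw [hA, hB] at h1 <;>
        first | rfl | exact absurd h1 (by decide)
  | orE _ _ _ _ ih0 ih1 ih2 ih3 =>
      intro M hM s hΓ
      have h0 := ih0 M hM s hΓ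
      rename_i A B C _ _ _ _
      simp only [SatII, ValII] at h0
      rcases orT_cases _ _ h0 with ⟨hA, hB⟩ | ⟨hA, hB⟩ | ⟨hA, hB⟩
      · apply ih1 M hM s
        intro D hD
        rcases hD with rfl | hD
        · simp only [SatII, ValII]; rw [hA, hB]; rfl
        · exact hΓ D hD
      · apply ih2 M hM s
        intro D hD
        rcases hD with rfl | hD
        · simp only [SatII, ValII]; rw [hA, hB]; rfl
        · exact hΓ D hD
      · apply ih3 M hM s
        intro D hD
        rcases hD with rfl | hD
        · simp only [SatII, ValII]; rw [hA, hB]; rfl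
        · exact hΓ D hD
  | andI _ _ ihA ihB =>
      intro M hM s hΓ
      have h1 := ihA M hM s hΓ
      have h2 := ihB M hM s hΓ
      simp only [SatII, ValII] at h1 h2 ⊢
      rw [h1, h2]; rfl
  | andE1 _ ih =>
      intro M hM s hΓ
      have h1 := ih M hM s hΓ
      simp only [SatII, ValII] at h1 ⊢
      rename_i A B _
      cases hA : ValII M A s <;> cases hB : ValII M B s <;> rw [hA, hB] at h1 <;>
        first | rfl | exact absurd h1 (by decide)
  | andE2 _ ih =>
      intro M hM s hΓ
      have h1 := ih M hM s hΓ
      simp only [SatII, ValII] at h1 ⊢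
      rename_i A B _
      cases hA : ValII M A s <;> cases hB : ValII M B s <;> rw [hA, hB] at h1 <;>
        first | rfl | exact absurd h1 (by decide)
  | boxI1 _ ih =>
      intro M hM s hΓ
      rename_i Γ' A' _
      have hdisj := hΓ _ (Set.mem_insert _ _)
      simp only [SatII, ValII] at hdisj
      have hAne : ValII M A' s ≠ TV.U := by
        intro h; rw [h] at hdisj; exact absurd hdisj (by decide)
      have hboxes : ∀ B ∈ Γ', ValII M (.box B) s = TV.T := by
        intro B hB
        exact hΓ _ (Set.mem_insert_of_mem _ ⟨B, hB, rfl⟩)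
      rw [SatII, boxT_iff]
      refine ⟨hAne, fun t hst => ?_⟩
      apply ih M hM t
      intro B hB
      exact ((boxT_iff M B s).mp (hboxes B hB)).2 t hst
  | boxI2 _ ih =>
      intro M hM s hΓ
      rename_i Γ' A' _
      have h1 := ih M hM s hΓ
      rw [SatII] at h1 ⊢
      rw [boxT_iff]
      constructor
      · rw [h1]; decide
      · intro t hst
        have hne : ValII M (Form.disj A' (.neg A')) t ≠ TV.U := by
          intro hU
          have := persistU M hM _ s t hst hU
          rw [h1] at this; exact absurd this (by decide)
        simp only [ValII] at hne ⊢
        cases hv : ValII M A' t <;> rw [hv] at hne <;>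
          first | rfl | exact absurd rfl hne
  | nOrI _ ih =>
      intro M hM s hΓ
      have h1 := ih M hM s hΓ
      simp only [SatII, ValII] at h1 ⊢
      rename_i A B _
      cases hA : ValII M A s <;> cases hB : ValII M B s <;> rw [hA, hB] at h1 <;>
        first | rfl | exact absurd h1 (by decide)
  | nOrE _ ih =>
      intro M hM s hΓ
      have h1 := ih M hM s hΓ
      simp only [SatII, ValII] at h1 ⊢
      rename_i A B _
      cases hA : ValII M A s <;> cases hB : ValII M B s <;> rw [hA, hB] at h1 <;>
        first | rfl | exact absurd h1 (by decide)
  | nAndI _ ih =>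
      intro M hM s hΓ
      have h1 := ih M hM s hΓ
      simp only [SatII, ValII] at h1 ⊢
      rename_i A B _
      cases hA : ValII M A s <;> cases hB : ValII M B s <;> rw [hA, hB] at h1 <;>
        first | rfl | exact absurd h1 (by decide)
  | nAndE _ ih =>
      intro M hM s hΓ
      have h1 := ih M hM s hΓ
      simp only [SatII, ValII] at h1 ⊢
      rename_i A B _
      cases hA : ValII M A s <;> cases hB : ValII M B s <;> rw [hA, hB] at h1 <;>
        first | rfl | exact absurd h1 (by decide)
  | nBoxI _ ih =>
      intro M hM s hΓ
      rename_i Γ' A' _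
      have h1 := ih M hM s hΓ
      rw [SatII, valII_disj, valII_neg] at h1 ⊢
      have hAne : ValII M A' s ≠ TV.U := by
        intro h; rw [h] at h1; exact absurd h1 (by decide)
      have hbne : ValII M (.box A') s ≠ TV.U :=
        fun h => hAne ((boxU_iff M A' s).mp h)
      cases hv : ValII M (.box A') s <;> rw [hv] at hbne <;>
        first | rfl | exact absurd rfl hbne
  | nBoxE _ ih =>
      intro M hM s hΓ
      rename_i Γ' A' _
      have h1 := ih M hM s hΓ
      rw [SatII, valII_disj, valII_neg] at h1 ⊢
      have hbne : ValII M (.box A') s ≠ TV.U := by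
        intro h; rw [h] at h1; exact absurd h1 (by decide)
      have hAne : ValII M A' s ≠ TV.U :=
        fun h => hbne ((boxU_iff M A' s).mpr h)
      cases hv : ValII M A' s <;> rw [hv] at hAne <;>
        first | rfl | exact absurd rfl hAne
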